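/- Let A and Y be pointed spaces with nondegenerate basepoints. Then the space (CA) ⋊̃ Y is contractible. -/

import Mathlib

open Set

noncomputable section
namespace BT

/-- The unit interval. -/
abbrev 𝕀 : Type := unitInterval

/-! ### Basic homotopy notions -/

/-- (Free) homotopy between two maps. -/
def Htpy {X Y : Type} [TopologicalSpace X] [TopologicalSpace Y] (f g : X → Y) : Prop :=
  ∃ H : X × 𝕀 → Y, Continuous H ∧ (∀ x, H (x, 0) = f x) ∧ (∀ x, H (x, 1) = g x)

/-- Pointed (basepoint-preserving) homotopy between two maps. -/
def PtHomotopic {X Y : Type} [TopologicalSpace X] [TopologicalSpace Y] (x₀ : X) (y₀ : Y)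
    (f g : X → Y) : Prop :=
  ∃ H : X × 𝕀 → Y, Continuous H ∧ (∀ x, H (x, 0) = f x) ∧ (∀ x, H (x, 1) = g x) ∧
    ∀ t, H (x₀, t) = y₀

/-- `f` is a homotopy equivalence. -/
def IsHomotopyEquiv {X Y : Type} [TopologicalSpace X] [TopologicalSpace Y] (f : X → Y) : Prop :=
  Continuous f ∧ ∃ g : Y → X, Continuous g ∧ Htpy (g ∘ f) id ∧ Htpy (f ∘ g) id

/-- `f` is a pointed homotopy equivalence. -/
def IsPtHomotopyEquiv {X Y : Type} [TopologicalSpace X] [TopologicalSpace Y] (x₀ : X) (y₀ : Y)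
    (f : X → Y) : Prop :=
  Continuous f ∧ f x₀ = y₀ ∧ ∃ g : Y → X, Continuous g ∧ g y₀ = x₀ ∧
    PtHomotopic x₀ x₀ (g ∘ f) id ∧ PtHomotopic y₀ y₀ (f ∘ g) id

/-- Homotopy extension property: `g` is a cofibration. -/
def HEP {Y X : Type} [TopologicalSpace Y] [TopologicalSpace X] (g : Y → X) : Prop :=
  ∀ (W : Type) [TopologicalSpace W] (u : X → W) (G : Y × 𝕀 → W),
    Continuous u → Continuous G → (∀ y, G (y, 0) = u (g y)) →
    ∃ G' : X × 𝕀 → W, Continuous G' ∧ (∀ x, G' (x, 0) = u x) ∧ ∀ y t, G' (g y, t) = G (y, t)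

/-- The basepoint `x₀` is nondegenerate: its inclusion is a cofibration. -/
def Nondeg {X : Type} [TopologicalSpace X] (x₀ : X) : Prop := HEP (fun _ : Unit => x₀)

/-- Homotopy lifting property with respect to all spaces. -/
def HLP {E B : Type} [TopologicalSpace E] [TopologicalSpace B] (p : E → B) : Prop :=
  ∀ (X : Type) [TopologicalSpace X] (f : X → E) (G : X × 𝕀 → B),
    Continuous f → Continuous G → (∀ x, G (x, 0) = p (f x)) →
    ∃ G' : X × 𝕀 → E, Continuous G' ∧ (∀ x, G' (x, 0) = f x) ∧ ∀ q, p (G' q) = G q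

/-! ### Loops, path spaces and the holonomy action -/

/-- The loop space of `B` at `b₀`, as a subspace of `C(𝕀, B)` (compact-open topology). -/
abbrev Loop (B : Type) [TopologicalSpace B] (b₀ : B) : Type :=
  {l : C(𝕀, B) // l 0 = b₀ ∧ l 1 = b₀}

/-- The constant loop, basepoint of the loop space. -/
def Loop.const (B : Type) [TopologicalSpace B] (b₀ : B) : Loop B b₀ :=
  ⟨ContinuousMap.const 𝕀 b₀, rfl, rfl⟩

/-- Concatenation of two paths (the first on `[0,1/2]`, the second on `[1/2,1]`). -/
def concat {B : Type} [TopologicalSpace B] (l l' : C(𝕀, B)) (h : l 1 = l' 0) : C(𝕀, B) :=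
  ((⟨l, rfl, rfl⟩ : Path (l 0) (l 1)).trans
    ((⟨l', rfl, rfl⟩ : Path (l' 0) (l' 1)).cast h rfl)).toContinuousMap

lemma concat_zero {B : Type} [TopologicalSpace B] (l l' : C(𝕀, B)) (h : l 1 = l' 0) :
    concat l l' h 0 = l 0 :=
  Path.source _

lemma concat_one {B : Type} [TopologicalSpace B] (l l' : C(𝕀, B)) (h : l 1 = l' 0) :
    concat l l' h 1 = l' 1 :=
  Path.target _

/-- The map `Ωg : ΩX → ΩY` induced on loop spaces by a pointed continuous `g`. -/
def loopMap {X Y : Type} [TopologicalSpace X] [TopologicalSpace Y] {x₀ : X} {y₀ : Y}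
    (g : X → Y) (hgc : Continuous g) (hg : g x₀ = y₀) : Loop X x₀ → Loop Y y₀ :=
  fun ω => ⟨⟨fun t => g (ω.1 t), hgc.comp ω.1.continuous⟩,
    by show g (ω.1 0) = y₀; rw [ω.2.1, hg],
    by show g (ω.1 1) = y₀; rw [ω.2.2, hg]⟩

lemma loopMap_const {X Y : Type} [TopologicalSpace X] [TopologicalSpace Y] {x₀ : X} {y₀ : Y}
    (g : X → Y) (hgc : Continuous g) (hg : g x₀ = y₀) :
    loopMap g hgc hg (Loop.const X x₀) = Loop.const Y y₀ :=
  Subtype.ext (ContinuousMap.ext fun t => by simp [loopMap, Loop.const, hg])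

/-- `Ê`, the mapping-path space of `p : E → B`. -/
abbrev Ehat {E B : Type} [TopologicalSpace E] [TopologicalSpace B] (p : E → B) : Type :=
  {q : E × C(𝕀, B) // p q.1 = q.2 0}

/-- Basepoint of `Ê`. -/
def Ehat.pt {E B : Type} [TopologicalSpace E] [TopologicalSpace B] (p : E → B)
    (e₀ : E) (b₀ : B) (hp : p e₀ = b₀) : Ehat p :=
  ⟨(e₀, ContinuousMap.const 𝕀 b₀), hp⟩

/-- The canonical inclusion `ι : E → Ê`, `x ↦ (x, const_{p x})`. -/
def Ehat.incl {E B : Type} [TopologicalSpace E] [TopologicalSpace B] (p : E → B) :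
    E → Ehat p :=
  fun x => ⟨(x, ContinuousMap.const 𝕀 (p x)), rfl⟩

/-- `p̂ : Ê → B`, `(x,l) ↦ l(1)`. -/
def phat {E B : Type} [TopologicalSpace E] [TopologicalSpace B] (p : E → B) : Ehat p → B :=
  fun q => q.1.2 1

lemma continuous_phat {E B : Type} [TopologicalSpace E] [TopologicalSpace B] (p : E → B) :
    Continuous (phat p) :=
  (ContinuousEvalConst.continuous_eval_const (1 : 𝕀)).comp (continuous_snd.comp continuous_subtype_val)

lemma phat_pt {E B : Type} [TopologicalSpace E] [TopologicalSpace B] (p : E → B)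
    (e₀ : E) (b₀ : B) (hp : p e₀ = b₀) : phat p (Ehat.pt p e₀ b₀ hp) = b₀ := rfl

/-- `F̂`, the homotopy fiber of `p : E → B` over `b₀`. -/
abbrev Fhat {E B : Type} [TopologicalSpace E] [TopologicalSpace B] (p : E → B) (b₀ : B) : Type :=
  {q : E × C(𝕀, B) // p q.1 = q.2 0 ∧ q.2 1 = b₀}

/-- Basepoint of `F̂`. -/
def Fhat.pt {E B : Type} [TopologicalSpace E] [TopologicalSpace B] (p : E → B)
    (e₀ : E) (b₀ : B) (hp : p e₀ = b₀) : Fhat p b₀ :=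
  ⟨(e₀, ContinuousMap.const 𝕀 b₀), hp, rfl⟩

/-- `ĵ : F̂ → Ê`, the inclusion. -/
def jhat {E B : Type} [TopologicalSpace E] [TopologicalSpace B] (p : E → B) (b₀ : B) :
    Fhat p b₀ → Ehat p :=
  fun q => ⟨q.1, q.2.1⟩

/-- The holonomy action `Γ : F̂ × ΩB → F̂`, `((x,l),l') ↦ (x, l*l')`. -/
def Gamma {E B : Type} [TopologicalSpace E] [TopologicalSpace B] (p : E → B) (b₀ : B) :
    Fhat p b₀ × Loop B b₀ → Fhat p b₀ :=
  fun q => ⟨(q.1.1.1, concat q.1.1.2 q.2.1 (q.1.2.2.trans q.2.2.1.symm)),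
    by rw [concat_zero]; exact q.1.2.1,
    by rw [concat_one]; exact q.2.2.2⟩

/-- The connecting map `δ : ΩB → F̂`, `l ↦ (e₀, l)`. -/
def deltaMap {E B : Type} [TopologicalSpace E] [TopologicalSpace B] (p : E → B)
    (e₀ : E) (b₀ : B) (hp : p e₀ = b₀) : Loop B b₀ → Fhat p b₀ :=
  fun l => ⟨(e₀, l.1), hp.trans l.2.1.symm, l.2.2⟩

/-! ### Quotient constructions -/

/-- Collapse a subset `S` of `α` to a single point. -/
abbrev Collapse {α : Type} (S : Set α) : Type :=
  Quot (fun a b => a = b ∨ (a ∈ S ∧ b ∈ S))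

/-- The subset collapsed to form the reduced cone. -/
abbrev coneSet (X : Type) (x₀ : X) : Set (X × 𝕀) := {q | q.2 = 0 ∨ q.1 = x₀}

/-- The reduced cone `CX = (X × I)/((X × {0}) ∪ ({x₀} × I))`. -/
abbrev Cone (X : Type) (x₀ : X) : Type := Collapse (coneSet X x₀)

def Cone.mk {X : Type} {x₀ : X} (x : X) (t : 𝕀) : Cone X x₀ := Quot.mk _ (x, t)

/-- The basepoint (cone point) of the reduced cone. -/
def Cone.pt {X : Type} {x₀ : X} : Cone X x₀ := Cone.mk x₀ 0

/-- The inclusion of `X` as the top `X × {1}` of the cone. -/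
def Cone.incl {X : Type} {x₀ : X} (x : X) : Cone X x₀ := Cone.mk x 1

lemma Cone.mk_zero {X : Type} {x₀ : X} (x : X) : (Cone.mk x 0 : Cone X x₀) = Cone.pt :=
  Quot.sound (Or.inr ⟨Or.inl rfl, Or.inl rfl⟩)

lemma Cone.mk_base {X : Type} {x₀ : X} (t : 𝕀) : (Cone.mk x₀ t : Cone X x₀) = Cone.pt :=
  Quot.sound (Or.inr ⟨Or.inr rfl, Or.inl rfl⟩)

/-- Functoriality of the reduced cone. -/
def Cone.map {X Y : Type} {x₀ : X} {y₀ : Y} (g : X → Y) (hg : g x₀ = y₀) :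
    Cone X x₀ → Cone Y y₀ :=
  Quot.lift (fun q => Cone.mk (g q.1) q.2) (by
    rintro a b (rfl | ⟨ha, hb⟩)
    · rfl
    · refine Quot.sound (Or.inr ⟨?_, ?_⟩)
      · rcases ha with h | h
        · exact Or.inl h
        · exact Or.inr (by rw [h, hg])
      · rcases hb with h | h
        · exact Or.inl h
        · exact Or.inr (by rw [h, hg]))

lemma Cone.map_pt {X Y : Type} {x₀ : X} {y₀ : Y} (g : X → Y) (hg : g x₀ = y₀) :
    Cone.map g hg (Cone.pt : Cone X x₀) = Cone.pt := by
  show Cone.mk (g x₀) 0 = Cone.pt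
  rw [hg, Cone.mk_zero]

lemma Cone.map_incl {X Y : Type} {x₀ : X} {y₀ : Y} (g : X → Y) (hg : g x₀ = y₀) (x : X) :
    Cone.map g hg (Cone.incl x : Cone X x₀) = Cone.incl (g x) := rfl

/-- The subset collapsed to form the reduced suspension. -/
abbrev suspSet (X : Type) (x₀ : X) : Set (X × 𝕀) := {q | q.2 = 0 ∨ q.2 = 1 ∨ q.1 = x₀}

/-- The reduced suspension `ΣX = (X × I)/((X × {0,1}) ∪ ({x₀} × I))`. -/
abbrev Susp (X : Type) (x₀ : X) : Type := Collapse (suspSet X x₀)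

def Susp.mk {X : Type} {x₀ : X} (x : X) (t : 𝕀) : Susp X x₀ := Quot.mk _ (x, t)

/-- The basepoint of the reduced suspension. -/
def Susp.pt {X : Type} {x₀ : X} : Susp X x₀ := Susp.mk x₀ 0

lemma Susp.mk_zero {X : Type} {x₀ : X} (x : X) : (Susp.mk x 0 : Susp X x₀) = Susp.pt :=
  Quot.sound (Or.inr ⟨Or.inl rfl, Or.inl rfl⟩)

lemma Susp.mk_one {X : Type} {x₀ : X} (x : X) : (Susp.mk x 1 : Susp X x₀) = Susp.pt :=
  Quot.sound (Or.inr ⟨Or.inr (Or.inl rfl), Or.inl rfl⟩)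

lemma Susp.mk_base {X : Type} {x₀ : X} (t : 𝕀) : (Susp.mk x₀ t : Susp X x₀) = Susp.pt :=
  Quot.sound (Or.inr ⟨Or.inr (Or.inr rfl), Or.inl rfl⟩)

/-- Functoriality of the reduced suspension. -/
def Susp.map {X Y : Type} {x₀ : X} {y₀ : Y} (g : X → Y) (hg : g x₀ = y₀) :
    Susp X x₀ → Susp Y y₀ :=
  Quot.lift (fun q => Susp.mk (g q.1) q.2) (by
    rintro a b (rfl | ⟨ha, hb⟩)
    · rfl
    · refine Quot.sound (Or.inr ⟨?_, ?_⟩)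
      · rcases ha with h | h | h
        · exact Or.inl h
        · exact Or.inr (Or.inl h)
        · exact Or.inr (Or.inr (by rw [h, hg]))
      · rcases hb with h | h | h
        · exact Or.inl h
        · exact Or.inr (Or.inl h)
        · exact Or.inr (Or.inr (by rw [h, hg])))

lemma Susp.map_pt {X Y : Type} {x₀ : X} {y₀ : Y} (g : X → Y) (hg : g x₀ = y₀) :
    Susp.map g hg (Susp.pt : Susp X x₀) = Susp.pt := by
  show Susp.mk (g x₀) 0 = Susp.pt
  rw [hg, Susp.mk_zero]

/-- The half smash `X ⋊ Y = (X × Y)/({x₀} × Y)`. -/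
abbrev HalfSmash (X : Type) (x₀ : X) (Y : Type) : Type :=
  Collapse {q : X × Y | q.1 = x₀}

def HalfSmash.mk {X : Type} {x₀ : X} {Y : Type} (q : X × Y) : HalfSmash X x₀ Y := Quot.mk _ q

/-- The basepoint of the half smash (the collapsed copy of `Y`). -/
def HalfSmash.pt {X : Type} {x₀ : X} {Y : Type} (y₀ : Y) : HalfSmash X x₀ Y :=
  HalfSmash.mk (x₀, y₀)

/-- The smash product `X ∧ Y = (X × Y)/((X × {y₀}) ∪ ({x₀} × Y))`. -/
abbrev Smash (X : Type) (x₀ : X) (Y : Type) (y₀ : Y) : Type :=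
  Collapse {q : X × Y | q.1 = x₀ ∨ q.2 = y₀}

def Smash.mk {X : Type} {x₀ : X} {Y : Type} {y₀ : Y} (q : X × Y) : Smash X x₀ Y y₀ :=
  Quot.mk _ q

def Smash.pt {X : Type} {x₀ : X} {Y : Type} {y₀ : Y} : Smash X x₀ Y y₀ := Smash.mk (x₀, y₀)

/-- The wedge sum `X ∨ Y`. -/
abbrev Wedge (X : Type) (x₀ : X) (Y : Type) (y₀ : Y) : Type :=
  Quot (fun a b : X ⊕ Y => a = Sum.inl x₀ ∧ b = Sum.inr y₀)

def Wedge.inl {X : Type} {x₀ : X} {Y : Type} {y₀ : Y} (x : X) : Wedge X x₀ Y y₀ :=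
  Quot.mk _ (Sum.inl x)

def Wedge.inr {X : Type} {x₀ : X} {Y : Type} {y₀ : Y} (y : Y) : Wedge X x₀ Y y₀ :=
  Quot.mk _ (Sum.inr y)

def Wedge.pt {X : Type} {x₀ : X} {Y : Type} {y₀ : Y} : Wedge X x₀ Y y₀ := Wedge.inl x₀

lemma Wedge.glue {X : Type} {x₀ : X} {Y : Type} {y₀ : Y} :
    (Wedge.inl x₀ : Wedge X x₀ Y y₀) = Wedge.inr y₀ :=
  Quot.sound ⟨rfl, rfl⟩

/-- The universal map out of a wedge. -/
def Wedge.elim {X : Type} {x₀ : X} {Y : Type} {y₀ : Y} {Z : Type}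
    (u : X → Z) (v : Y → Z) (h : u x₀ = v y₀) : Wedge X x₀ Y y₀ → Z :=
  Quot.lift (Sum.elim u v) (by rintro a b ⟨rfl, rfl⟩; exact h)

/-! ### The thickened half smash -/

/-- The thickened half smash `X ⋊̃ Y = ((X × Y) ⊔ CY)/((x₀,y) ∼ (y,1))`. -/
abbrev THS (X : Type) (x₀ : X) (Y : Type) (y₀ : Y) : Type :=
  Quot (fun a b : (X × Y) ⊕ Cone Y y₀ =>
    ∃ y, a = Sum.inl (x₀, y) ∧ b = Sum.inr (Cone.incl y))

def THS.inl {X : Type} {x₀ : X} {Y : Type} {y₀ : Y} (q : X × Y) : THS X x₀ Y y₀ :=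
  Quot.mk _ (Sum.inl q)

def THS.inr {X : Type} {x₀ : X} {Y : Type} {y₀ : Y} (c : Cone Y y₀) : THS X x₀ Y y₀ :=
  Quot.mk _ (Sum.inr c)

/-- The basepoint of the thickened half smash. -/
def THS.pt {X : Type} {x₀ : X} {Y : Type} {y₀ : Y} : THS X x₀ Y y₀ := THS.inr Cone.pt

lemma THS.glue {X : Type} {x₀ : X} {Y : Type} {y₀ : Y} (y : Y) :
    (THS.inl (x₀, y) : THS X x₀ Y y₀) = THS.inr (Cone.incl y) :=
  Quot.sound ⟨y, rfl, rfl⟩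

lemma THS.inl_base {X : Type} {x₀ : X} {Y : Type} {y₀ : Y} :
    (THS.inl (x₀, y₀) : THS X x₀ Y y₀) = THS.pt := by
  rw [THS.glue]
  show THS.inr (Cone.mk y₀ 1) = THS.inr Cone.pt
  rw [Cone.mk_base]

/-- The map `u ⋊̃ 1` induced on thickened half smashes by a pointed map `u`. -/
def THS.map {X X' : Type} {x₀ : X} {x₀' : X'} {Y : Type} {y₀ : Y}
    (u : X → X') (hu : u x₀ = x₀') : THS X x₀ Y y₀ → THS X' x₀' Y y₀ :=
  Quot.lift
    (fun s => match s with
      | Sum.inl q => THS.inl (u q.1, q.2)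
      | Sum.inr c => THS.inr c)
    (by rintro a b ⟨y, rfl, rfl⟩; exact Quot.sound ⟨y, by rw [hu], rfl⟩)

/-- The map `1 ⋊̃ v` induced on thickened half smashes by a pointed map `v`
(acting as `Cv` on the cone part). -/
def THS.mapRight {X : Type} {x₀ : X} {Y Y' : Type} {y₀ : Y} {y₀' : Y'}
    (v : Y → Y') (hv : v y₀ = y₀') : THS X x₀ Y y₀ → THS X x₀ Y' y₀' :=
  Quot.lift
    (fun s => match s with
      | Sum.inl q => THS.inl (q.1, v q.2)
      | Sum.inr c => THS.inr (Cone.map v hv c))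
    (by rintro a b ⟨y, rfl, rfl⟩; exact Quot.sound ⟨v y, rfl, rfl⟩)

/-- Evaluation `ε̄ : CΩX → X`, `[ω,t] ↦ ω(t)`. -/
def coneEval (X : Type) [TopologicalSpace X] (x₀ : X) :
    Cone (Loop X x₀) (Loop.const X x₀) → X :=
  Quot.lift (fun q => q.1.1 q.2) (by
    have key : ∀ c ∈ coneSet (Loop X x₀) (Loop.const X x₀), c.1.1 c.2 = x₀ := by
      rintro ⟨ω, t⟩ (h | h)
      · simp only at h; rw [h]; exact ω.2.1
      · simp only at h; rw [h]; rfl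
    rintro a b (rfl | ⟨ha, hb⟩)
    · rfl
    · show a.1.1 a.2 = b.1.1 b.2
      rw [key a ha, key b hb])

/-- Evaluation `ε : ΣΩX → X`, `[ω,t] ↦ ω(t)`. -/
def evalSusp (X : Type) [TopologicalSpace X] (x₀ : X) :
    Susp (Loop X x₀) (Loop.const X x₀) → X :=
  Quot.lift (fun q => q.1.1 q.2) (by
    have key : ∀ c ∈ suspSet (Loop X x₀) (Loop.const X x₀), c.1.1 c.2 = x₀ := by
      rintro ⟨ω, t⟩ (h | h | h)
      · simp only at h; rw [h]; exact ω.2.1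
      · simp only at h; rw [h]; exact ω.2.2
      · simp only at h; rw [h]; rfl
    rintro a b (rfl | ⟨ha, hb⟩)
    · rfl
    · show a.1.1 a.2 = b.1.1 b.2
      rw [key a ha, key b hb])

lemma evalSusp_pt (X : Type) [TopologicalSpace X] (x₀ : X) :
    evalSusp X x₀ Susp.pt = x₀ := rfl

/-- The map `ρ : X ⋊̃ ΩY → X ∨ Y`. -/
def rho (X : Type) (x₀ : X) (Y : Type) [TopologicalSpace Y] (y₀ : Y) :
    THS X x₀ (Loop Y y₀) (Loop.const Y y₀) → Wedge X x₀ Y y₀ :=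
  Quot.lift
    (fun s => match s with
      | Sum.inl q => Wedge.inl q.1
      | Sum.inr c => Wedge.inr (coneEval Y y₀ c))
    (by
      rintro a b ⟨ω, rfl, rfl⟩
      show Wedge.inl x₀ = Wedge.inr (coneEval Y y₀ (Cone.incl ω))
      have : coneEval Y y₀ (Cone.incl ω) = y₀ := ω.2.2
      rw [this, Wedge.glue])

/-- The suspension map `E_X : X → ΩΣX`, `x ↦ (t ↦ [x,t])`. -/
def suspUnit (X : Type) [TopologicalSpace X] (x₀ : X) :
    X → Loop (Susp X x₀) (Susp.pt : Susp X x₀) :=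
  fun x => ⟨⟨fun t => Susp.mk x t, by exact continuous_quot_mk.comp (Continuous.prodMk_right x)⟩,
    Susp.mk_zero x, Susp.mk_one x⟩

lemma suspUnit_pt (X : Type) [TopologicalSpace X] (x₀ : X) :
    suspUnit X x₀ x₀ = Loop.const (Susp X x₀) Susp.pt :=
  Subtype.ext (ContinuousMap.ext fun t => Susp.mk_base t)


/-! ### The join and Whitehead products -/

/-- The identifications defining the reduced join. -/
def joinRel (X : Type) (x₀ : X) (Y : Type) (y₀ : Y) (a b : X × 𝕀 × Y) : Prop :=
  a = b ∨ (a.2.1 = 0 ∧ b.2.1 = 0 ∧ a.2.2 = b.2.2) ∨ (a.2.1 = 1 ∧ b.2.1 = 1 ∧ a.1 = b.1) ∨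
    (a.1 = x₀ ∧ a.2.2 = y₀ ∧ b.1 = x₀ ∧ b.2.2 = y₀)

/-- The (reduced) join `X * Y`. -/
abbrev Join (X : Type) (x₀ : X) (Y : Type) (y₀ : Y) : Type := Quot (joinRel X x₀ Y y₀)

def Join.mk {X : Type} {x₀ : X} {Y : Type} {y₀ : Y} (x : X) (t : 𝕀) (y : Y) :
    Join X x₀ Y y₀ := Quot.mk _ (x, t, y)

def Join.pt {X : Type} {x₀ : X} {Y : Type} {y₀ : Y} : Join X x₀ Y y₀ := Join.mk x₀ 0 y₀

/-- Functoriality of the join in both variables (for pointed maps). -/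
def Join.map {X X' Y Y' : Type} {x₀ : X} {x₀' : X'} {y₀ : Y} {y₀' : Y'}
    (u : X → X') (v : Y → Y') (hu : u x₀ = x₀') (hv : v y₀ = y₀') :
    Join X x₀ Y y₀ → Join X' x₀' Y' y₀' :=
  Quot.lift (fun q => Join.mk (u q.1) q.2.1 (v q.2.2)) (by
    rintro a b (rfl | ⟨h1, h2, h3⟩ | ⟨h1, h2, h3⟩ | ⟨h1, h2, h3, h4⟩)
    · rfl
    · exact Quot.sound (Or.inr (Or.inl ⟨h1, h2, by rw [h3]⟩))
    · exact Quot.sound (Or.inr (Or.inr (Or.inl ⟨h1, h2, by rw [h3]⟩)))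
    · exact Quot.sound (Or.inr (Or.inr (Or.inr
        ⟨by rw [h1, hu], by rw [h2, hv], by rw [h3, hu], by rw [h4, hv]⟩))))

lemma Join.map_pt {X X' Y Y' : Type} {x₀ : X} {x₀' : X'} {y₀ : Y} {y₀' : Y'}
    (u : X → X') (v : Y → Y') (hu : u x₀ = x₀') (hv : v y₀ = y₀') :
    Join.map u v hu hv (Join.pt : Join X x₀ Y y₀) = Join.pt := by
  show Join.mk (u x₀) 0 (v y₀) = Join.pt
  rw [hu, hv]; rfl

/-- `t ↦ 2t`, clamped to the unit interval. -/
def dbl (t : 𝕀) : 𝕀 := Set.projIcc 0 1 zero_le_one (2 * (t : ℝ))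

/-- `t ↦ 2 - 2t`, clamped to the unit interval. -/
def dbl' (t : 𝕀) : 𝕀 := Set.projIcc 0 1 zero_le_one (2 - 2 * (t : ℝ))

lemma dbl_zero : dbl 0 = 0 := by
  simp [dbl, Set.projIcc]

lemma dbl'_one : dbl' 1 = 0 := by
  simp [dbl', Set.projIcc]

/-- The Whitehead product `[u,v] : A * B → Z` of `u : ΣA → Z` and `v : ΣB → Z`:
`[u,v](a,t,b) = u[a,2t]` for `t ≤ 1/2` and `[u,v](a,t,b) = v[b,2-2t]` for `t ≥ 1/2`. -/
def whitehead {A : Type} {a₀ : A} {B : Type} {b₀ : B} {Z : Type}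
    (u : Susp A a₀ → Z) (v : Susp B b₀ → Z) (huv : u Susp.pt = v Susp.pt) :
    Join A a₀ B b₀ → Z :=
  Quot.lift
    (fun q => if (q.2.1 : ℝ) ≤ 1 / 2 then u (Susp.mk q.1 (dbl q.2.1))
      else v (Susp.mk q.2.2 (dbl' q.2.1)))
    (by
      rintro a b (rfl | ⟨h1, h2, h3⟩ | ⟨h1, h2, h3⟩ | ⟨h1, h2, h3, h4⟩)
      · rfl
      · try dsimp only
        have ha : ((a.2.1 : 𝕀) : ℝ) ≤ 1 / 2 := by rw [h1]; norm_num
        have hb : ((b.2.1 : 𝕀) : ℝ) ≤ 1 / 2 := by rw [h2]; norm_num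
        rw [if_pos ha, if_pos hb, h1, h2, dbl_zero, Susp.mk_zero, Susp.mk_zero]
      · try dsimp only
        have ha : ¬ ((a.2.1 : 𝕀) : ℝ) ≤ 1 / 2 := by rw [h1]; norm_num
        have hb : ¬ ((b.2.1 : 𝕀) : ℝ) ≤ 1 / 2 := by rw [h2]; norm_num
        rw [if_neg ha, if_neg hb, h1, h2, dbl'_one, Susp.mk_zero, Susp.mk_zero]
      · try dsimp only
        by_cases ha : ((a.2.1 : 𝕀) : ℝ) ≤ 1 / 2 <;> by_cases hb : ((b.2.1 : 𝕀) : ℝ) ≤ 1 / 2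
        · rw [if_pos ha, if_pos hb, h1, h3, Susp.mk_base, Susp.mk_base]
        · rw [if_pos ha, if_neg hb, h1, h4, Susp.mk_base, Susp.mk_base, huv]
        · rw [if_neg ha, if_pos hb, h2, h3, Susp.mk_base, Susp.mk_base, huv]
        · rw [if_neg ha, if_neg hb, h2, h4, Susp.mk_base, Susp.mk_base])

/-- The map `w : ΩX * ΩY → X ⋊̃ ΩY`, given by `w(ω,t,ω') = (ω(2t), ω')` for `t ≤ 1/2`
and `w(ω,t,ω') = [ω', 2-2t]` for `t ≥ 1/2`. -/
def wMap (X : Type) [TopologicalSpace X] (x₀ : X) (Y : Type) [TopologicalSpace Y] (y₀ : Y) :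
    Join (Loop X x₀) (Loop.const X x₀) (Loop Y y₀) (Loop.const Y y₀) →
      THS X x₀ (Loop Y y₀) (Loop.const Y y₀) :=
  Quot.lift
    (fun q => if (q.2.1 : ℝ) ≤ 1 / 2 then THS.inl (q.1.1 (dbl q.2.1), q.2.2)
      else THS.inr (Cone.mk q.2.2 (dbl' q.2.1)))
    (by
      have key : ∀ q : Loop X x₀ × 𝕀 × Loop Y y₀, q.1 = Loop.const X x₀ →
          q.2.2 = Loop.const Y y₀ →
          (if ((q.2.1 : 𝕀) : ℝ) ≤ 1 / 2
            then (THS.inl (q.1.1 (dbl q.2.1), q.2.2) : THS X x₀ (Loop Y y₀) (Loop.const Y y₀))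
            else THS.inr (Cone.mk q.2.2 (dbl' q.2.1))) = THS.pt := by
        intro q h1 h2
        by_cases hq : ((q.2.1 : 𝕀) : ℝ) ≤ 1 / 2
        · rw [if_pos hq, h1, h2]
          show THS.inl (x₀, Loop.const Y y₀) = THS.pt
          exact THS.inl_base
        · rw [if_neg hq, h2, Cone.mk_base]
          rfl
      rintro a b (rfl | ⟨h1, h2, h3⟩ | ⟨h1, h2, h3⟩ | ⟨h1, h2, h3, h4⟩)
      · rfl
      · try dsimp only
        have ha : ((a.2.1 : 𝕀) : ℝ) ≤ 1 / 2 := by rw [h1]; norm_num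
        have hb : ((b.2.1 : 𝕀) : ℝ) ≤ 1 / 2 := by rw [h2]; norm_num
        rw [if_pos ha, if_pos hb, h1, h2, dbl_zero, h3, a.1.2.1, b.1.2.1]
      · try dsimp only
        have ha : ¬ ((a.2.1 : 𝕀) : ℝ) ≤ 1 / 2 := by rw [h1]; norm_num
        have hb : ¬ ((b.2.1 : 𝕀) : ℝ) ≤ 1 / 2 := by rw [h2]; norm_num
        rw [if_neg ha, if_neg hb, h1, h2, dbl'_one, Cone.mk_zero, Cone.mk_zero]
      · exact (key a h1 h2).trans (key b h3 h4).symm)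

/-- `w̄ : X * ΩY → ΣX ⋊̃ ΩY`, the composite `w ∘ (E_X * 1)`. -/
def wBar (X : Type) [TopologicalSpace X] (x₀ : X) (Y : Type) [TopologicalSpace Y] (y₀ : Y) :
    Join X x₀ (Loop Y y₀) (Loop.const Y y₀) →
      THS (Susp X x₀) (Susp.pt : Susp X x₀) (Loop Y y₀) (Loop.const Y y₀) :=
  fun z => wMap (Susp X x₀) Susp.pt Y y₀
    (Join.map (suspUnit X x₀) id (suspUnit_pt X x₀) rfl z)

/-! ### Mapping cylinders and mapping cones -/

/-- The mapping cylinder `Cyl(g) = ((X × I) ⊔ Y)/((x,1) ∼ g(x))`. -/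
abbrev Cyl {X Y : Type} (g : X → Y) : Type :=
  Quot (fun a b : (X × 𝕀) ⊕ Y => ∃ x, a = Sum.inl (x, 1) ∧ b = Sum.inr (g x))

/-- Points of the cylinder part. -/
def Cyl.mk {X Y : Type} (g : X → Y) (x : X) (t : 𝕀) : Cyl g := Quot.mk _ (Sum.inl (x, t))

/-- The front inclusion `i : X → Cyl(g)`, `x ↦ (x,0)`. -/
def Cyl.front {X Y : Type} (g : X → Y) (x : X) : Cyl g := Cyl.mk g x 0

/-- The end inclusion `Y → Cyl(g)`. -/
def Cyl.endIncl {X Y : Type} (g : X → Y) (y : Y) : Cyl g := Quot.mk _ (Sum.inr y)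

/-- The projection `q : Cyl(g) → Y`. -/
def Cyl.proj {X Y : Type} (g : X → Y) : Cyl g → Y :=
  Quot.lift (Sum.elim (fun q => g q.1) id) (by rintro a b ⟨x, rfl, rfl⟩; rfl)

/-- The reduced mapping cone `C(g) = (CX ⊔ Y)/((x,1) ∼ g(x))`. -/
abbrev MCone {X Y : Type} (x₀ : X) (g : X → Y) : Type :=
  Quot (fun a b : Cone X x₀ ⊕ Y => ∃ x, a = Sum.inl (Cone.incl x) ∧ b = Sum.inr (g x))

/-- The inclusion of the cone into the mapping cone. -/
def MCone.coneIn {X Y : Type} {x₀ : X} {g : X → Y} (c : Cone X x₀) : MCone x₀ g :=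
  Quot.mk _ (Sum.inl c)

/-- The end inclusion `Y → C(g)`. -/
def MCone.inr {X Y : Type} {x₀ : X} {g : X → Y} (y : Y) : MCone x₀ g :=
  Quot.mk _ (Sum.inr y)

/-- The basepoint of a (reduced) mapping cone of a pointed map. -/
def MCone.pt {X Y : Type} {x₀ : X} {g : X → Y} (y₀ : Y) : MCone x₀ g := MCone.inr y₀

/-- The map `C(g) → Z` induced by `u : Y → Z` with `u ∘ g` constant. -/
def MCone.desc {X Y Z : Type} (x₀ : X) (g : X → Y) (u : Y → Z) (z₀ : Z)
    (h : ∀ x, u (g x) = z₀) : MCone x₀ g → Z :=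
  Quot.lift (Sum.elim (fun _ => z₀) u) (by rintro a b ⟨x, rfl, rfl⟩; exact (h x).symm)

/-- The double mapping cylinder (homotopy pushout) of `X ←g- Y -k→ Z`. -/
abbrev DCyl {X Y Z : Type} (g : Y → X) (k : Y → Z) : Type :=
  Quot (fun a b : X ⊕ (Y × 𝕀) ⊕ Z =>
    (∃ y, a = Sum.inr (Sum.inl (y, 0)) ∧ b = Sum.inl (g y)) ∨
    (∃ y, a = Sum.inr (Sum.inl (y, 1)) ∧ b = Sum.inr (Sum.inr (k y))))

def DCyl.inX {X Y Z : Type} {g : Y → X} {k : Y → Z} (x : X) : DCyl g k :=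
  Quot.mk _ (Sum.inl x)

def DCyl.inCyl {X Y Z : Type} {g : Y → X} {k : Y → Z} (y : Y) (t : 𝕀) : DCyl g k :=
  Quot.mk _ (Sum.inr (Sum.inl (y, t)))

def DCyl.inZ {X Y Z : Type} {g : Y → X} {k : Y → Z} (z : Z) : DCyl g k :=
  Quot.mk _ (Sum.inr (Sum.inr z))

/-- The (ordinary) pushout `X ∪_Y Z`. -/
abbrev Pushout {X Y Z : Type} (g : Y → X) (k : Y → Z) : Type :=
  Quot (fun a b : X ⊕ Z => ∃ y, a = Sum.inl (g y) ∧ b = Sum.inr (k y))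

/-- The projection from the double mapping cylinder to the pushout. -/
def DCyl.proj {X Y Z : Type} (g : Y → X) (k : Y → Z) : DCyl g k → Pushout g k :=
  Quot.lift
    (fun s => match s with
      | Sum.inl x => Quot.mk _ (Sum.inl x)
      | Sum.inr (Sum.inl q) => Quot.mk _ (Sum.inl (g q.1))
      | Sum.inr (Sum.inr z) => Quot.mk _ (Sum.inr z))
    (by
      rintro a b (⟨y, rfl, rfl⟩ | ⟨y, rfl, rfl⟩)
      · rfl
      · exact Quot.sound ⟨y, rfl, rfl⟩)

/-! ### Constructions for the Beben–Theriault diagram -/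

/-- The lift `f̃ : A → F̂` of `f`, `a ↦ (f(a), const)`. -/
def ftilde {A E B : Type} [TopologicalSpace A] [TopologicalSpace E] [TopologicalSpace B]
    (p : E → B) (b₀ : B) (f : A → E) (hpf : ∀ a, p (f a) = b₀) : A → Fhat p b₀ :=
  fun a => ⟨(f a, ContinuousMap.const 𝕀 b₀), hpf a, rfl⟩

lemma ftilde_pt {A E B : Type} [TopologicalSpace A] [TopologicalSpace E] [TopologicalSpace B]
    (p : E → B) (b₀ : B) (f : A → E) (hpf : ∀ a, p (f a) = b₀)
    (a₀ : A) (e₀ : E) (hfa : f a₀ = e₀) (hp : p e₀ = b₀) :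
    ftilde p b₀ f hpf a₀ = Fhat.pt p e₀ b₀ hp :=
  Subtype.ext (by show (f a₀, _) = (e₀, _); rw [hfa])

/-- `Γ̃ : F̂ ⋊̃ ΩB → F̂`, the extension of `Γ` by a null homotopy `H` of `δ`. -/
def GammaTilde {E B : Type} [TopologicalSpace E] [TopologicalSpace B]
    (p : E → B) (e₀ : E) (b₀ : B) (hp : p e₀ = b₀)
    (H : Cone (Loop B b₀) (Loop.const B b₀) → Fhat p b₀)
    (hH : ∀ l', H (Cone.incl l') = Gamma p b₀ (Fhat.pt p e₀ b₀ hp, l')) :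
    THS (Fhat p b₀) (Fhat.pt p e₀ b₀ hp) (Loop B b₀) (Loop.const B b₀) → Fhat p b₀ :=
  Quot.lift
    (fun s => match s with
      | Sum.inl q => Gamma p b₀ q
      | Sum.inr c => H c)
    (by rintro a b ⟨y, rfl, rfl⟩; exact (hH y).symm)

/-- `p' : E' = E ∪_f CA → B`, extending `p` by the constant map on the cone. -/
def pPrime {A E B : Type} (a₀ : A) (p : E → B) (b₀ : B) (f : A → E)
    (hpf : ∀ a, p (f a) = b₀) : MCone a₀ f → B :=
  Quot.lift (Sum.elim (fun _ => b₀) p) (by rintro a b ⟨x, rfl, rfl⟩; exact (hpf x).symm)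

/-- `h : F̂ → F'`, induced by the inclusion `E → E'`. -/
def hMap {A E B : Type} [TopologicalSpace A] [TopologicalSpace E] [TopologicalSpace B]
    (a₀ : A) (p : E → B) (b₀ : B) (f : A → E) (hpf : ∀ a, p (f a) = b₀) :
    Fhat p b₀ → Fhat (pPrime a₀ p b₀ f hpf) b₀ :=
  fun q => ⟨(MCone.inr q.1.1, q.1.2), q.2.1, q.2.2⟩


/-! ### Further auxiliary maps -/

lemma continuous_ehatIncl {E B : Type} [TopologicalSpace E] [TopologicalSpace B]
    (p : E → B) (hpc : Continuous p) : Continuous (Ehat.incl p) :=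
  Continuous.subtype_mk (continuous_id.prodMk (ContinuousMap.continuous_const'.comp hpc)) _

lemma ehatIncl_pt {E B : Type} [TopologicalSpace E] [TopologicalSpace B]
    (p : E → B) (e₀ : E) (b₀ : B) (hp : p e₀ = b₀) :
    Ehat.incl p e₀ = Ehat.pt p e₀ b₀ hp :=
  Subtype.ext (by show (e₀, ContinuousMap.const 𝕀 (p e₀)) = (e₀, ContinuousMap.const 𝕀 b₀); rw [hp])

/-- `q̃ : X ⋊̃ Y → X`: the first projection on `X × Y`, constant on the cone. -/
def thsProj {X : Type} {x₀ : X} {Y : Type} {y₀ : Y} : THS X x₀ Y y₀ → X :=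
  Quot.lift
    (fun s => match s with
      | Sum.inl q => q.1
      | Sum.inr _ => x₀)
    (by rintro a b ⟨y, rfl, rfl⟩; rfl)

/-- The projection `X ⋊̃ Y → X ⋊ Y` collapsing the cone to the basepoint. -/
def thsToHalf {X : Type} {x₀ : X} {Y : Type} (y₀ : Y) : THS X x₀ Y y₀ → HalfSmash X x₀ Y :=
  Quot.lift
    (fun s => match s with
      | Sum.inl q => HalfSmash.mk q
      | Sum.inr _ => HalfSmash.pt y₀)
    (by rintro a b ⟨y, rfl, rfl⟩; exact Quot.sound (Or.inr ⟨rfl, rfl⟩))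

lemma wMap_pt (X : Type) [TopologicalSpace X] (x₀ : X) (Y : Type) [TopologicalSpace Y] (y₀ : Y) :
    wMap X x₀ Y y₀ Join.pt = THS.inl (x₀, Loop.const Y y₀) := by
  show (if ((0 : 𝕀) : ℝ) ≤ 1 / 2
      then (THS.inl ((Loop.const X x₀).1 (dbl 0), Loop.const Y y₀) :
        THS X x₀ (Loop Y y₀) (Loop.const Y y₀))
      else THS.inr (Cone.mk (Loop.const Y y₀) (dbl' 0))) = THS.inl (x₀, Loop.const Y y₀)
  rw [if_pos (by norm_num)]
  rfl

lemma wBar_pt (X : Type) [TopologicalSpace X] (x₀ : X) (Y : Type) [TopologicalSpace Y] (y₀ : Y) :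
    wBar X x₀ Y y₀ Join.pt = THS.inl (Susp.pt, Loop.const Y y₀) := by
  show wMap (Susp X x₀) Susp.pt Y y₀
    (Join.map (suspUnit X x₀) id (suspUnit_pt X x₀) (rfl : id (Loop.const Y y₀) = Loop.const Y y₀) Join.pt) = _
  rw [Join.map_pt, wMap_pt]

/-- `ĵ + ε̄ : F̂ ∨ CΩÊ → Ê`. -/
def jplusEps {E B : Type} [TopologicalSpace E] [TopologicalSpace B]
    (p : E → B) (e₀ : E) (b₀ : B) (hp : p e₀ = b₀) :
    Wedge (Fhat p b₀) (Fhat.pt p e₀ b₀ hp)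
      (Cone (Loop (Ehat p) (Ehat.pt p e₀ b₀ hp)) (Loop.const (Ehat p) (Ehat.pt p e₀ b₀ hp)))
      Cone.pt → Ehat p :=
  Wedge.elim (jhat p b₀) (coneEval (Ehat p) (Ehat.pt p e₀ b₀ hp)) rfl

/-- `α : F̂ ∨ CΩÊ → Cyl(Γ)`: `x ↦ i(x, const)` on `F̂` and `i(·, const) ∘ H ∘ CΩp̂` on `CΩÊ`. -/
def alphaMap {E B : Type} [TopologicalSpace E] [TopologicalSpace B]
    (p : E → B) (e₀ : E) (b₀ : B) (hp : p e₀ = b₀)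
    (H : Cone (Loop B b₀) (Loop.const B b₀) → Fhat p b₀)
    (hHpt : H Cone.pt = Fhat.pt p e₀ b₀ hp) :
    Wedge (Fhat p b₀) (Fhat.pt p e₀ b₀ hp)
      (Cone (Loop (Ehat p) (Ehat.pt p e₀ b₀ hp)) (Loop.const (Ehat p) (Ehat.pt p e₀ b₀ hp)))
      Cone.pt → Cyl (Gamma p b₀) :=
  Wedge.elim (fun x => Cyl.front (Gamma p b₀) (x, Loop.const B b₀))
    (fun c => Cyl.front (Gamma p b₀)
      (H (Cone.map (loopMap (phat p) (continuous_phat p) (phat_pt p e₀ b₀ hp))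
        (loopMap_const (phat p) (continuous_phat p) (phat_pt p e₀ b₀ hp)) c), Loop.const B b₀))
    (by (try dsimp only); rw [Cone.map_pt, hHpt])

/-- The map induced on double mapping cylinders by compatible maps of the pieces. -/
def DCyl.map {X Y Z X' Y' Z' : Type} {g : Y → X} {k : Y → Z} {g' : Y' → X'} {k' : Y' → Z'}
    (u₁ : X → X') (u₂ : Y → Y') (u₃ : Z → Z')
    (hg : ∀ y, g' (u₂ y) = u₁ (g y)) (hk : ∀ y, k' (u₂ y) = u₃ (k y)) :
    DCyl g k → DCyl g' k' :=
  Quot.lift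
    (fun s => match s with
      | Sum.inl x => DCyl.inX (u₁ x)
      | Sum.inr (Sum.inl q) => DCyl.inCyl (u₂ q.1) q.2
      | Sum.inr (Sum.inr z) => DCyl.inZ (u₃ z))
    (by
      rintro a b (⟨y, rfl, rfl⟩ | ⟨y, rfl, rfl⟩)
      · exact Quot.sound (Or.inl ⟨u₂ y, rfl, by rw [hg]⟩)
      · exact Quot.sound (Or.inr ⟨u₂ y, rfl, by rw [hk]⟩))

/-- The map `p_W : W_E → B` induced on a double mapping cylinder of spaces over `B`. -/
def DCyl.toBase {B X Y Z : Type} {g : Y → X} {k : Y → Z}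
    (p₁ : X → B) (p₂ : Y → B) (p₃ : Z → B)
    (hg : ∀ y, p₁ (g y) = p₂ y) (hk : ∀ y, p₃ (k y) = p₂ y) : DCyl g k → B :=
  Quot.lift
    (fun s => match s with
      | Sum.inl x => p₁ x
      | Sum.inr (Sum.inl q) => p₂ q.1
      | Sum.inr (Sum.inr z) => p₃ z)
    (by
      rintro a b (⟨y, rfl, rfl⟩ | ⟨y, rfl, rfl⟩)
      · exact (hg y).symm
      · exact (hk y).symm)

/-! The reduced cone `CX` contracts onto its cone point by rescaling the cone coordinate, and
this contraction fixes the basepoint. Running it on the `CA` factor of `(CA) ⋊̃ Y` deforms the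
whole space onto its cone `CY`, which is contractible for the same reason. -/

open ContinuousMap

lemma continuous_quot_prod_left {α Z : Type} [TopologicalSpace α] [TopologicalSpace Z]
    {r : α → α → Prop} {F : Quot r × 𝕀 → Z}
    (hF : Continuous fun p : α × 𝕀 => F (Quot.mk r p.1, p.2)) : Continuous F :=
  isQuotientMap_quot_mk.continuous_lift_prod_left hF

lemma Htpy.homotopic {X Y : Type} [TopologicalSpace X] [TopologicalSpace Y] {f g : C(X, Y)}
    (h : Htpy f g) : f.Homotopic g := by
  obtain ⟨H, hHc, hH0, hH1⟩ := h
  exact ⟨{ toFun := fun p => H (p.2, p.1)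
           map_zero_left := hH0
           map_one_left := hH1 }⟩

lemma contractibleSpace_of_ptHomotopic_const_id {X : Type} [TopologicalSpace X] {x₀ : X}
    (h : PtHomotopic x₀ x₀ (fun _ => x₀) id) : ContractibleSpace X := by
  obtain ⟨H, hHc, hH0, hH1, -⟩ := h
  rw [contractible_iff_id_nullhomotopic]
  exact ⟨x₀, (Htpy.homotopic (f := const X x₀) ⟨H, hHc, hH0, hH1⟩).symm⟩

namespace Cone

variable {X : Type} {x₀ : X}

lemma mul_mem_coneSet {q : X × 𝕀} (hq : q ∈ coneSet X x₀) (σ : 𝕀) :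
    (q.1, q.2 * σ) ∈ coneSet X x₀ := by
  rcases hq with h | h
  · exact Or.inl (by simp only [h, zero_mul])
  · exact Or.inr h

def scale (c : Cone X x₀) (σ : 𝕀) : Cone X x₀ :=
  Quot.lift (fun q => (Cone.mk q.1 (q.2 * σ) : Cone X x₀))
    (by
      rintro a b (rfl | ⟨ha, hb⟩)
      · rfl
      · exact Quot.sound (Or.inr ⟨mul_mem_coneSet ha σ, mul_mem_coneSet hb σ⟩)) c

lemma continuous_scale [TopologicalSpace X] :
    Continuous fun p : Cone X x₀ × 𝕀 => p.1.scale p.2 :=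
  continuous_quot_prod_left (continuous_quot_mk.comp (by fun_prop))

lemma scale_zero (c : Cone X x₀) : c.scale 0 = Cone.pt := by
  induction c using Quot.ind with
  | mk q => exact (congrArg (Cone.mk q.1) (mul_zero q.2)).trans (Cone.mk_zero q.1)

lemma scale_one (c : Cone X x₀) : c.scale 1 = c := by
  induction c using Quot.ind with
  | mk q => exact congrArg (Cone.mk q.1) (mul_one q.2)

lemma pt_scale (σ : 𝕀) : (Cone.pt : Cone X x₀).scale σ = Cone.pt :=
  congrArg (Cone.mk x₀) (zero_mul σ)

lemma ptHomotopic_const_id [TopologicalSpace X] :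
    PtHomotopic (Cone.pt : Cone X x₀) Cone.pt (fun _ => Cone.pt) id :=
  ⟨fun p => p.1.scale p.2, continuous_scale, scale_zero, scale_one, pt_scale⟩

instance [TopologicalSpace X] : ContractibleSpace (Cone X x₀) :=
  contractibleSpace_of_ptHomotopic_const_id ptHomotopic_const_id

lemma continuous_incl [TopologicalSpace X] : Continuous (Cone.incl : X → Cone X x₀) :=
  continuous_quot_mk.comp (by fun_prop)

end Cone

namespace THS

variable {X : Type} [TopologicalSpace X] {x₀ : X} {Y : Type} [TopologicalSpace Y] {y₀ : Y}

lemma continuous_inr : Continuous (THS.inr : Cone Y y₀ → THS X x₀ Y y₀) :=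
  continuous_quot_mk.comp _root_.continuous_inr

lemma continuous_prod_of_inl_of_inr {Z : Type} [TopologicalSpace Z] {F : THS X x₀ Y y₀ × 𝕀 → Z}
    (hl : Continuous fun p : (X × Y) × 𝕀 => F (THS.inl p.1, p.2))
    (hr : Continuous fun p : Cone Y y₀ × 𝕀 => F (THS.inr p.1, p.2)) : Continuous F := by
  refine continuous_quot_prod_left ?_
  have hsplit : (fun p : ((X × Y) ⊕ Cone Y y₀) × 𝕀 => F (Quot.mk _ p.1, p.2)) =
      Sum.elim (fun p => F (THS.inl p.1, p.2)) (fun p => F (THS.inr p.1, p.2)) ∘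
        Homeomorph.sumProdDistrib := by
    funext p
    rcases p with ⟨w | w, s⟩ <;> rfl
  rw [hsplit]
  exact (hl.sumElim hr).comp Homeomorph.sumProdDistrib.continuous

def toCone : THS X x₀ Y y₀ → Cone Y y₀ :=
  Quot.lift (Sum.elim (fun q => Cone.incl q.2) id) (by rintro _ _ ⟨y, rfl, rfl⟩; rfl)

lemma continuous_toCone : Continuous (toCone : THS X x₀ Y y₀ → Cone Y y₀) :=
  continuous_quot_lift _ ((Cone.continuous_incl.comp continuous_snd).sumElim continuous_id)

/-- Contract the `X` factor and fix the cone; at time `0` the point `(x₀, y)` is the top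
`[y, 1]` of `CY`. -/
lemma htpy_inr_toCone (h : PtHomotopic x₀ x₀ (fun _ => x₀) id) :
    Htpy (THS.inr ∘ toCone : THS X x₀ Y y₀ → THS X x₀ Y y₀) id := by
  obtain ⟨H, hHc, hH0, hH1, hHx₀⟩ := h
  let K : THS X x₀ Y y₀ × 𝕀 → THS X x₀ Y y₀ := fun p =>
    Quot.lift (Sum.elim (fun q => THS.inl (H (q.1, p.2), q.2)) THS.inr)
      (by rintro _ _ ⟨y, rfl, rfl⟩; exact (congrArg (THS.inl ⟨·, y⟩) (hHx₀ p.2)).trans (glue y))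
      p.1
  refine ⟨K, continuous_prod_of_inl_of_inr ?_ continuous_inr.fst', ?_, ?_⟩
  · exact continuous_quot_mk.comp (continuous_inl.comp (by fun_prop))
  · rintro ⟨⟨x, y⟩ | c⟩
    · exact (congrArg (THS.inl ⟨·, y⟩) (hH0 x)).trans (glue y)
    · rfl
  · rintro ⟨⟨x, y⟩ | c⟩
    · exact congrArg (THS.inl ⟨·, y⟩) (hH1 x)
    · rfl

def homotopyEquivCone (h : PtHomotopic x₀ x₀ (fun _ => x₀) id) : THS X x₀ Y y₀ ≃ₕ Cone Y y₀ where
  toFun := ⟨toCone, continuous_toCone⟩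
  invFun := ⟨THS.inr, continuous_inr⟩
  left_inv := Htpy.homotopic (htpy_inr_toCone h)
  right_inv := Homotopic.refl _

end THS

theorem statement10_general (A Y : Type) [TopologicalSpace A] [TopologicalSpace Y] (a₀ : A) (y₀ : Y) :
    ContractibleSpace (THS (Cone A a₀) Cone.pt Y y₀) :=
  (THS.homotopyEquivCone Cone.ptHomotopic_const_id).contractibleSpace

/-- For `A`, `Y` with nondegenerate basepoints, the space `(CA) ⋊̃ Y` is
contractible. -/
theorem statement10 (A Y : Type) [TopologicalSpace A] [TopologicalSpace Y] (a₀ : A) (y₀ : Y)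
    (hA : Nondeg a₀) (hY : Nondeg y₀) :
    ContractibleSpace (THS (Cone A a₀) Cone.pt Y y₀) :=
  statement10_general A Y a₀ y₀

end BT
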